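/- If a formula α of M⊃ has a natural deduction proof, then α has a natural deduction proof in which every application of ⊃-Intro is greedy, i.e., every ⊃-Intro application inferring A⊃B discharges all occurrences of A that are open assumptions of the sub-derivation of its premise B. -/

import Mathlib

/-- Formulas of minimal implicational logic M⊃. -/
inductive MFormula : Type
  | var : ℕ → MFormula
  | imp : MFormula → MFormula → MFormula
deriving DecidableEq

namespace MFormula

/-- Size of a formula: number of vertices of its syntax tree. -/
def size : MFormula → ℕ
  | .var _ => 1
  | .imp a b => a.size + b.size + 1

/-- Subformula relation. -/
inductive Subf : MFormula → MFormula → Prop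
  | refl (t : MFormula) : Subf t t
  | impL {s a b : MFormula} : Subf s a → Subf s (imp a b)
  | impR {s a b : MFormula} : Subf s b → Subf s (imp a b)

/-- The finite set of subformulas of a formula. -/
def subformulas : MFormula → Finset MFormula
  | .var n => {.var n}
  | .imp a b => insert (imp a b) (a.subformulas ∪ b.subformulas)

end MFormula

/-- Natural deduction derivation trees for M⊃.  A leaf is an assumption
occurrence, carrying its formula and `none` if it stays open, or `some n`
if it is discharged by the `n`-th ⊃-Intro application below it (de Bruijn
style, counting enclosing ⊃-Intro applications from the leaf downwards).
`elim a b` applies ⊃-Elim with minor premise `a` and major premise `b`;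
`intro A t` applies ⊃-Intro discharging (the marked occurrences of) `A`. -/
inductive NDTree : Type
  | leaf : MFormula → Option ℕ → NDTree
  | elim : NDTree → NDTree → NDTree
  | intro : MFormula → NDTree → NDTree
deriving DecidableEq

namespace NDTree

/-- Conclusion of a derivation tree relative to the list of formulas
introduced by enclosing ⊃-Intro applications (innermost first);
`none` if the tree is not a well-formed derivation. -/
def concl : NDTree → List MFormula → Option MFormula
  | .leaf A none, _ => some A
  | .leaf A (some n), ctx => if ctx[n]? = some A then some A else none
  | .elim a b, ctx =>
      match concl a ctx, concl b ctx with
      | some x, some (.imp p q) => if p = x then some q else none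
      | _, _ => none
  | .intro A t, ctx => (concl t (A :: ctx)).map (fun B => MFormula.imp A B)

/-- Size of a derivation: its number of nodes. -/
def size : NDTree → ℕ
  | .leaf _ _ => 1
  | .elim a b => a.size + b.size + 1
  | .intro _ t => t.size + 1

/-- Height of a derivation: maximal number of edges on a root-to-leaf path. -/
def height : NDTree → ℕ
  | .leaf _ _ => 0
  | .elim a b => max a.height b.height + 1
  | .intro _ t => t.height + 1

/-- Open assumptions of a subtree sitting below `d` of its own
⊃-Intro applications (at top level `d = 0`): leaves discharged by no
⊃-Intro of the subtree itself. -/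
def openAssumAux : NDTree → ℕ → Finset MFormula
  | .leaf A none, _ => {A}
  | .leaf A (some n), d => if d ≤ n then {A} else ∅
  | .elim a b, d => openAssumAux a d ∪ openAssumAux b d
  | .intro _ t, d => openAssumAux t (d + 1)

/-- The set of open (undischarged) assumptions of a derivation. -/
def openAssum (t : NDTree) : Finset MFormula := openAssumAux t 0

/-- A derivation is normal if no formula occurrence is simultaneously the
conclusion of a ⊃-Intro and the major premise of a ⊃-Elim. -/
def Normal : NDTree → Prop
  | .leaf _ _ => True
  | .elim a b => Normal a ∧ Normal b ∧ ∀ A u, b ≠ .intro A u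
  | .intro _ t => Normal t

/-- `T` is a proof of `α`: a derivation with conclusion `α` and
no open assumptions. -/
def IsProofOf (t : NDTree) (α : MFormula) : Prop :=
  concl t [] = some α ∧ openAssum t = ∅

/-- A normal derivation (in context `ctx`) is expanded if every minimal
formula, i.e. every formula occurrence that is both the conclusion of a
⊃-Elim and the premise of a ⊃-Intro, is a propositional variable. -/
def Expanded : NDTree → List MFormula → Prop
  | .leaf _ _, _ => True
  | .elim a b, ctx => Expanded a ctx ∧ Expanded b ctx
  | .intro A t, ctx => Expanded t (A :: ctx) ∧
      (∀ u v, t = .elim u v → ∃ i, concl t (A :: ctx) = some (.var i))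

/-- `Subtree s t`: `s` is a sub-derivation (a node of `t` together with
everything above it) of `t`. -/
inductive Subtree : NDTree → NDTree → Prop
  | refl (t : NDTree) : Subtree t t
  | elimL {s a b : NDTree} : Subtree s a → Subtree s (.elim a b)
  | elimR {s a b : NDTree} : Subtree s b → Subtree s (.elim a b)
  | intro {s : NDTree} {A : MFormula} {t : NDTree} : Subtree s t → Subtree s (.intro A t)

/-- Number of instances (sub-derivation occurrences identical to `s`
as labeled trees) of `s` in a derivation. -/
def countInst (s : NDTree) : NDTree → ℕ
  | .leaf A o => if NDTree.leaf A o = s then 1 else 0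
  | .elim a b => (if NDTree.elim a b = s then 1 else 0) + countInst s a + countInst s b
  | .intro A t => (if NDTree.intro A t = s then 1 else 0) + countInst s t

/-- Number of instances of `s` occurring at level (distance from the root) `μ`. -/
def countInstAt (s : NDTree) : NDTree → ℕ → ℕ
  | t, 0 => if t = s then 1 else 0
  | .leaf _ _, _ + 1 => 0
  | .elim a b, n + 1 => countInstAt s a n + countInstAt s b n
  | .intro _ t, n + 1 => countInstAt s t n

/-- `OccAt T ctx s ctx'` : `s` occurs in `T` (whose own context is `ctx`)
as a node-with-everything-above-it, with enclosing-intro context `ctx'`. -/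
inductive OccAt : NDTree → List MFormula → NDTree → List MFormula → Prop
  | refl (t : NDTree) (ctx : List MFormula) : OccAt t ctx t ctx
  | elimL {T : NDTree} {ctx : List MFormula} {a b : NDTree} {ctx' : List MFormula} :
      OccAt T ctx (.elim a b) ctx' → OccAt T ctx a ctx'
  | elimR {T : NDTree} {ctx : List MFormula} {a b : NDTree} {ctx' : List MFormula} :
      OccAt T ctx (.elim a b) ctx' → OccAt T ctx b ctx'
  | intro {T : NDTree} {ctx : List MFormula} {A : MFormula} {t : NDTree} {ctx' : List MFormula} :
      OccAt T ctx (.intro A t) ctx' → OccAt T ctx t (A :: ctx')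

/-- Each node of a derivation lies on a unique branch; branches are in
bijection with their endpoints: the root of the derivation and the minor
premises of ⊃-Elim applications. -/
def IsBranchEndpoint (T s : NDTree) (ctx : List MFormula) : Prop :=
  (s = T ∧ ctx = []) ∨ ∃ u, OccAt T [] (NDTree.elim s u) ctx

/-- The (top-down) sequence of formulas of the branch ending at the root of
the given subtree: trace upwards through premises of ⊃-Intro and major
premises of ⊃-Elim up to a top-formula. -/
def branchSeq : NDTree → List MFormula → Option (List MFormula)
  | .leaf A o, ctx => (concl (.leaf A o) ctx).map (fun c => [c])
  | .elim a b, ctx =>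
      match branchSeq b ctx, concl (.elim a b) ctx with
      | some l, some c => some (l ++ [c])
      | _, _ => none
  | .intro A t, ctx =>
      match branchSeq t (A :: ctx), concl (.intro A t) ctx with
      | some l, some c => some (l ++ [c])
      | _, _ => none

/-- The (top-down) E-part of the branch ending at the root of the given
subtree: the top-formula and the successive conclusions of major-premise
⊃-Elim steps, ending at the minimal formula of the branch. -/
def epart : NDTree → List MFormula → Option (List MFormula)
  | .leaf A o, ctx => (concl (.leaf A o) ctx).map (fun c => [c])
  | .elim a b, ctx =>
      match epart b ctx, concl (.elim a b) ctx with
      | some l, some c => some (l ++ [c])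
      | _, _ => none
  | .intro A t, ctx => epart t (A :: ctx)

/-- Number of ⊃-Intro applications forming the I-part at the bottom of a
branch endpoint subtree. -/
def introCount : NDTree → ℕ
  | .intro _ t => introCount t + 1
  | _ => 0

/-- Count of branch endpoints strictly inside the given subtree (i.e. minor
premises of ⊃-Elim) whose branch has formula sequence `b`. -/
def brCount (b : List MFormula) : NDTree → List MFormula → ℕ
  | .leaf _ _, _ => 0
  | .elim a c, ctx =>
      (if branchSeq a ctx = some b then 1 else 0) + brCount b a ctx + brCount b c ctx
  | .intro A t, ctx => brCount b t (A :: ctx)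

/-- Total number of branches of `T` whose formula sequence is `b`. -/
def brTotal (b : List MFormula) (T : NDTree) : ℕ :=
  (if branchSeq T [] = some b then 1 else 0) + brCount b T []

/-- Count of branch endpoints strictly inside the given subtree (whose root
is at level `d` of the ambient derivation) whose branch has formula
sequence `b` and whose minimal formula occurs at level `μ`. -/
def brMinCount (b : List MFormula) (μ : ℕ) : NDTree → List MFormula → ℕ → ℕ
  | .leaf _ _, _, _ => 0
  | .elim a c, ctx, d =>
      (if branchSeq a ctx = some b ∧ d + 1 + introCount a = μ then 1 else 0)
      + brMinCount b μ a ctx (d + 1) + brMinCount b μ c ctx (d + 1)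
  | .intro A t, ctx, d => brMinCount b μ t (A :: ctx) (d + 1)

/-- Total number of branches of `T` with formula sequence `b` whose minimal
formula occurs at level `μ` of `T`. -/
def brMinTotal (b : List MFormula) (μ : ℕ) (T : NDTree) : ℕ :=
  (if branchSeq T [] = some b ∧ introCount T = μ then 1 else 0) + brMinCount b μ T [] 0

/-- No occurrence of `A` in the given subtree (sitting at intro-depth `d`
below a fixed ⊃-Intro application) is an open assumption of the subtree
escaping that ⊃-Intro: every leaf labeled `A` is discharged by an
⊃-Intro at distance at most `d`. -/
def NoOpenBeyond (A : MFormula) : NDTree → ℕ → Prop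
  | .leaf B o, d => B = A → ∃ n, o = some n ∧ n ≤ d
  | .elim a b, d => NoOpenBeyond A a d ∧ NoOpenBeyond A b d
  | .intro _ t, d => NoOpenBeyond A t (d + 1)

/-- Every ⊃-Intro application of the derivation is greedy: it discharges
all occurrences of its assumption that are open in the sub-derivation of
its premise. -/
def Greedy : NDTree → Prop
  | .leaf _ _ => True
  | .elim a b => Greedy a ∧ Greedy b
  | .intro A t => NoOpenBeyond A t 0 ∧ Greedy t

/-- A matrix of `T`: a sub-derivation all of whose instances in `T` occur
at a single level. -/
def IsMatrix (s T : NDTree) : Prop :=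
  Subtree s T ∧ ∃ μ, ∀ ν, 0 < countInstAt s T ν → ν = μ

end NDTree

/-- A Kripke model for M⊃: a preordered set of worlds with a monotone
valuation on propositional variables. -/
structure KModel where
  World : Type
  le : World → World → Prop
  le_refl : ∀ w, le w w
  le_trans : ∀ {a b c}, le a b → le b c → le a c
  val : World → ℕ → Prop
  mono : ∀ {w w'}, le w w' → ∀ p, val w p → val w' p

/-- Kripke satisfaction for M⊃. -/
def KSat (M : KModel) : MFormula → M.World → Prop
  | .var p, w => M.val w p
  | .imp a b, w => ∀ w', M.le w w' → KSat M a w' → KSat M b w'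

/-- Semantic entailment: every world of every Kripke model satisfying all
of `Δ` satisfies `β`. -/
def KEntails (Δ : Set MFormula) (β : MFormula) : Prop :=
  ∀ (M : KModel) (w : M.World), (∀ δ ∈ Δ, KSat M δ w) → KSat M β w

/-! Re-point every assumption leaf to the innermost enclosing ⊃-Intro of its formula, leaving
it open if there is none. The conclusion does not change, since each leaf is still discharged
by an ⊃-Intro of its own formula. A leaf that was discharged stays discharged, now possibly
by an ⊃-Intro nearer to it, so no assumption becomes open. And an ⊃-Intro of `A` now
discharges every leaf `A` above it except those captured by a nearer ⊃-Intro of `A`, which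
is exactly greediness. -/

theorem List.getElem?_eq_some_of_idxOf?_eq_some {α : Type*} [BEq α] [LawfulBEq α]
    {l : List α} {a : α} {n : ℕ} (h : l.idxOf? a = some n) : l[n]? = some a := by
  obtain ⟨hn, hget, -⟩ := List.idxOf?_eq_some_iff.mp h
  exact List.getElem?_eq_some_iff.mpr ⟨hn, hget⟩

theorem List.exists_idxOf?_eq_some_le {α : Type*} [BEq α] [LawfulBEq α]
    {l : List α} {a : α} {n : ℕ} (h : l[n]? = some a) : ∃ m, l.idxOf? a = some m ∧ m ≤ n := by
  obtain ⟨m, hm⟩ := Option.isSome_iff_exists.mp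
    (List.isSome_idxOf?.mpr (List.mem_of_getElem? h))
  obtain ⟨_, hget⟩ := List.getElem?_eq_some_iff.mp h
  obtain ⟨_, _, hfirst⟩ := List.idxOf?_eq_some_iff.mp hm
  exact ⟨m, hm, not_lt.mp fun hnm => hfirst n hnm hget⟩

namespace NDTree

theorem getElem?_eq_some_of_concl_leaf {A : MFormula} {n : ℕ} {ctx : List MFormula}
    {β : MFormula} (h : concl (.leaf A (some n)) ctx = some β) : ctx[n]? = some A := by
  simp only [concl] at h
  split_ifs at h with hn
  exact hn

theorem concl_elim_eq_some {a b : NDTree} {ctx : List MFormula} {β : MFormula}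
    (h : concl (.elim a b) ctx = some β) :
    ∃ x, concl a ctx = some x ∧ concl b ctx = some (.imp x β) := by
  simp only [concl] at h
  split at h
  · rename_i x _ q ha hb
    split_ifs at h with hp
    cases h
    exact ⟨x, ha, hp ▸ hb⟩
  · cases h

theorem concl_intro_eq_some {A : MFormula} {t : NDTree} {ctx : List MFormula} {β : MFormula}
    (h : concl (.intro A t) ctx = some β) : ∃ B, concl t (A :: ctx) = some B ∧ .imp A B = β :=
  Option.map_eq_some_iff.mp h

def greedify : NDTree → List MFormula → NDTree
  | .leaf A _, ctx => .leaf A (ctx.idxOf? A)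
  | .elim a b, ctx => .elim (greedify a ctx) (greedify b ctx)
  | .intro A t, ctx => .intro A (greedify t (A :: ctx))

theorem concl_greedify : ∀ {t : NDTree} {ctx : List MFormula} {β : MFormula},
    concl t ctx = some β → concl (greedify t ctx) ctx = some β
  | .leaf A none, ctx, β, h => by
      cases hi : ctx.idxOf? A with
      | none => simpa [greedify, hi, concl] using h
      | some n => simpa [greedify, hi, concl, List.getElem?_eq_some_of_idxOf?_eq_some hi] using h
  | .leaf A (some n), ctx, β, h => by
      have hA := getElem?_eq_some_of_concl_leaf h
      obtain ⟨m, hm, -⟩ := List.exists_idxOf?_eq_some_le hA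
      simpa [greedify, hm, concl, List.getElem?_eq_some_of_idxOf?_eq_some hm, hA] using h
  | .elim a b, ctx, β, h => by
      obtain ⟨x, ha, hb⟩ := concl_elim_eq_some h
      simp [greedify, concl, concl_greedify ha, concl_greedify hb]
  | .intro A t, ctx, β, h => by
      obtain ⟨B, ht, rfl⟩ := concl_intro_eq_some h
      simp [greedify, concl, concl_greedify ht]

theorem openAssumAux_leaf_subset (A : MFormula) (o : Option ℕ) (d : ℕ) :
    openAssumAux (.leaf A o) d ⊆ {A} := by
  cases o with
  | none => exact subset_rfl
  | some n => simp only [openAssumAux]; split <;> simp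

theorem openAssumAux_greedify_subset : ∀ {t : NDTree} {ctx : List MFormula} {β : MFormula},
    concl t ctx = some β → ∀ d, openAssumAux (greedify t ctx) d ⊆ openAssumAux t d
  | .leaf A none, _, _, _, d => openAssumAux_leaf_subset A _ d
  | .leaf A (some n), _, _, h, d => by
      obtain ⟨m, hm, hmn⟩ := List.exists_idxOf?_eq_some_le (getElem?_eq_some_of_concl_leaf h)
      simp only [greedify, hm, openAssumAux]
      split_ifs <;> first | omega | simp
  | .elim a b, _, _, h, d => by
      obtain ⟨x, ha, hb⟩ := concl_elim_eq_some h
      exact Finset.union_subset_union (openAssumAux_greedify_subset ha d)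
        (openAssumAux_greedify_subset hb d)
  | .intro A t, _, _, h, d => by
      obtain ⟨B, ht, -⟩ := concl_intro_eq_some h
      exact openAssumAux_greedify_subset ht (d + 1)

theorem noOpenBeyond_greedify {A : MFormula} : ∀ (t : NDTree) {ctx : List MFormula} {d : ℕ},
    ctx[d]? = some A → NoOpenBeyond A (greedify t ctx) d
  | .leaf B _, _, _, h => by
      rintro rfl
      exact List.exists_idxOf?_eq_some_le h
  | .elim a b, _, _, h => ⟨noOpenBeyond_greedify a h, noOpenBeyond_greedify b h⟩
  | .intro _ t, _, _, h => noOpenBeyond_greedify t (by simpa using h)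

theorem greedy_greedify : ∀ (t : NDTree) (ctx : List MFormula), Greedy (greedify t ctx)
  | .leaf _ _, _ => trivial
  | .elim a b, ctx => ⟨greedy_greedify a ctx, greedy_greedify b ctx⟩
  | .intro _ t, _ => ⟨noOpenBeyond_greedify t rfl, greedy_greedify t _⟩

theorem IsProofOf.greedify {T : NDTree} {α : MFormula} (hT : T.IsProofOf α) :
    (T.greedify []).IsProofOf α :=
  ⟨concl_greedify hT.1, Finset.subset_empty.mp (hT.2 ▸ openAssumAux_greedify_subset hT.1 0)⟩

end NDTree

/-- if α has a proof, it has a proof in which every ⊃-Intro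
application is greedy. -/
theorem greedy_discharge (α : MFormula)
    (h : ∃ T : NDTree, T.IsProofOf α) :
    ∃ T' : NDTree, T'.IsProofOf α ∧ T'.Greedy := by
  obtain ⟨T, hT⟩ := h
  exact ⟨T.greedify [], hT.greedify, T.greedy_greedify []⟩
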